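/- arXiv:2602.08279 — 2 statements merged into one kernel-verified Lean document; each statement's English description precedes it below -/
import Mathlib

section
/- Let K = (C, ⟨Q_1,…,Q_k⟩) be a pure-form CMI with repeated-index set 𝕀_K, and let P_1,…,P_t be the nonempty sets among Q_1\𝕀_K,…,Q_k\𝕀_K. Then, for any joint distribution of X_1,…,X_n, K is valid if and only if both (C, ⟨𝕀_K, 𝕀_K⟩) and (C, ⟨P_1,…,P_t⟩) are valid; equivalently, K is valid if and only if H(X_{𝕀_K} | X_C) = 0 and J(X_{P_i}, 1≤i≤t | X_C) = 0. -/
open scoped Classical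

namespace Paper

variable {n : ℕ}

/-- The marginal distribution of the coordinates in `α` of a joint distribution `p` of
the discrete random variables `X_1, …, X_n` (each taking countably many values, coded
as natural numbers). -/
noncomputable def marginal (p : PMF (Fin n → ℕ)) (α : Finset (Fin n)) :
    PMF ({ i // i ∈ α } → ℕ) :=
  p.map fun x i => x i.1

/-- The Shannon (joint) entropy `H(X_α)`. -/
noncomputable def Hm (p : PMF (Fin n → ℕ)) (α : Finset (Fin n)) : ℝ :=
  ∑' y, Real.negMulLog ((marginal p α) y).toReal

/-- The conditional entropy `H(X_β | X_α) = H(X_{β ∪ α}) - H(X_α)`. -/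
noncomputable def Hc (p : PMF (Fin n → ℕ)) (β α : Finset (Fin n)) : ℝ :=
  Hm p (β ∪ α) - Hm p α

/-- Every individual random variable `X_i` has finite Shannon entropy
(the series defining `H(X_i)` is summable). -/
def FiniteEntropy (p : PMF (Fin n → ℕ)) : Prop :=
  ∀ i : Fin n, Summable fun y : ℕ => Real.negMulLog ((p.map fun x => x i) y).toReal

/-- `J(X_{Q_1}, …, X_{Q_k} | X_C) = (∑ i, H(X_{Q_i}|X_C)) - H(X_{Q_1},…,X_{Q_k}|X_C)`;
the joint conditional entropy of the tuple `(X_{Q_1},…,X_{Q_k})` equals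
`H(X_{∪ i, Q_i} | X_C)` since the two tuples determine each other. -/
noncomputable def J (p : PMF (Fin n → ℕ)) (C : Finset (Fin n))
    (Qs : Multiset (Finset (Fin n))) : ℝ :=
  (Qs.map fun Q => Hc p Q C).sum - Hc p Qs.sup C

/-- A conditional mutual independency (CMI) on `{1, …, n}`: a conditioning set `C`
together with a finite multiset `⟨Q_1, …, Q_k⟩` of subsets of `{1, …, n}`. -/
structure CMI (n : ℕ) where
  C : Finset (Fin n)
  Qs : Multiset (Finset (Fin n))

/-- `K` is valid for the joint distribution `p`. -/
def Valid (p : PMF (Fin n → ℕ)) (K : CMI n) : Prop :=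
  J p K.C K.Qs = 0

/-- `K` is degenerate: valid for every finite-entropy joint distribution. -/
def Degenerate (K : CMI n) : Prop :=
  ∀ p : PMF (Fin n → ℕ), FiniteEntropy p → Valid p K

/-- `K ∼ K'`: valid for exactly the same finite-entropy joint distributions. -/
def Equivalent (K K' : CMI n) : Prop :=
  ∀ p : PMF (Fin n → ℕ), FiniteEntropy p → (Valid p K ↔ Valid p K')

/-- `K` implies `K'`. -/
def Implies (K K' : CMI n) : Prop :=
  ∀ p : PMF (Fin n → ℕ), FiniteEntropy p → Valid p K → Valid p K'

/-- `K` is in pure form: every `Q_i` is nonempty and disjoint from `C`. -/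
def IsPure (K : CMI n) : Prop :=
  ∀ Q ∈ K.Qs, Q ≠ ∅ ∧ Q ∩ K.C = ∅

/-- The pure form `pur(K) = (C, ⟨Q_i \ C : Q_i \ C ≠ ∅⟩)`. -/
noncomputable def pur (K : CMI n) : CMI n :=
  ⟨K.C, (K.Qs.map fun Q => Q \ K.C).filter fun Q => Q ≠ ∅⟩

/-- The set `𝕀_K` of repeated indices of `K`: indices lying in `Q_i ∩ Q_j` for two
distinct entries `i ≠ j` of the multiset (automatically `∅` when `k ≤ 1`). -/
noncomputable def repSet (K : CMI n) : Finset (Fin n) :=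
  Finset.univ.filter fun q => 2 ≤ Multiset.card (K.Qs.filter fun Q => q ∈ Q)

/-- The multiset `⟨P_1, …, P_t⟩` of nonempty sets among the `Q_i \ 𝕀_K`. -/
noncomputable def parts (K : CMI n) : Multiset (Finset (Fin n)) :=
  (K.Qs.map fun Q => Q \ repSet K).filter fun P => P ≠ ∅

/-- The multiset of the `P_j`-entries of the canonical form `can(K)`
(general notation). -/
noncomputable def canParts (K : CMI n) : Multiset (Finset (Fin n)) :=
  if Multiset.card K.Qs ≤ 1 then 0
  else if repSet K ≠ ∅ ∧ Multiset.card (parts K) ≤ 1 then 0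
  else parts K

/-- The canonical form `can(K)` (of a pure-form CMI); all degenerate canonical forms
`(·,⟨⟩)` are represented by `⟨∅, 0⟩`. -/
noncomputable def can (K : CMI n) : CMI n :=
  if Multiset.card K.Qs ≤ 1 then ⟨∅, 0⟩
  else if repSet K = ∅ then ⟨K.C, parts K⟩
  else if Multiset.card (parts K) ≤ 1 then ⟨K.C, {repSet K, repSet K}⟩
  else ⟨K.C, repSet K ::ₘ repSet K ::ₘ parts K⟩

/-- `R_K^{K'}`: the CMI "`K'` conditioning on `K`"; the degenerate case `(·,⟨⟩)` is
represented by `⟨∅, 0⟩`. -/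
noncomputable def RCond (K K' : CMI n) : CMI n :=
  let I := repSet (pur K)
  let I' := repSet (pur K')
  let Ts := ((canParts (pur K')).map fun P => P \ I).filter fun T => T ≠ ∅
  if I' \ I = ∅ ∧ Multiset.card Ts ≤ 1 then ⟨∅, 0⟩
  else if I' \ I = ∅ then ⟨K'.C \ I, Ts⟩
  else if Multiset.card Ts ≤ 1 then ⟨K'.C \ I, {I' \ I, I' \ I}⟩
  else ⟨K'.C \ I, (I' \ I) ::ₘ (I' \ I) ::ₘ Ts⟩

/-! Everything rests on submodularity of entropy, `H(X_{A ∪ B}) + H(X_S) ≤ H(X_A) + H(X_B)`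
for `S ⊆ A ∩ B`, which is Gibbs' inequality `log t ≤ t - 1` against the law
`p(x_A) p(x_B) / p(x_S)` under which `X_A` and `X_B` are conditionally independent given `X_S`.
Conditionally on `X_C` it gives `H(X_q | X_C) ≤ I(X_{Q_i}; X_{Q_j} | X_C) ≤ J` for a repeated
index `q ∈ Q_i ∩ Q_j`, so validity forces `H(X_{𝕀_K} | X_C) = 0`. Once `X_{𝕀_K}` is a function of
`X_C`, removing `𝕀_K` from every `Q_i` and dropping the empty sets changes none of the
conditional entropies in `J`, so `J(K) = J(X_{P_i}, 1 ≤ i ≤ t | X_C)`. -/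

open scoped ENNReal

section PMF

variable {α β : Type*}

-- Valued in `ℝ≥0∞`, so that no summability side conditions arise.
noncomputable def entropy (P : PMF α) : ℝ≥0∞ :=
  ∑' a, ENNReal.ofReal (Real.negMulLog (P a).toReal)

lemma toReal_apply_le_one (P : PMF α) (a : α) : (P a).toReal ≤ 1 :=
  ENNReal.toReal_le_of_le_ofReal zero_le_one (by simpa using P.coe_le_one a)

lemma negMulLog_toReal_apply_nonneg (P : PMF α) (a : α) :
    0 ≤ Real.negMulLog (P a).toReal :=
  Real.negMulLog_nonneg ENNReal.toReal_nonneg (toReal_apply_le_one P a)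

lemma tsum_map_mul (P : PMF α) (f : α → β) (g : β → ℝ≥0∞) :
    ∑' b, P.map f b * g b = ∑' a, P a * g (f a) := by
  calc ∑' b, P.map f b * g b
      = ∑' b, ∑' a, if b = f a then P a * g b else 0 := by
        refine tsum_congr fun b => ?_
        rw [PMF.map_apply, ← ENNReal.tsum_mul_right]
        exact tsum_congr fun a => by split_ifs <;> simp
    _ = ∑' a, ∑' b, if b = f a then P a * g b else 0 := ENNReal.tsum_comm
    _ = ∑' a, P a * g (f a) := tsum_congr fun a => tsum_ite_eq (f a) fun b => P a * g b

lemma apply_le_map_apply (P : PMF α) (f : α → β) (a : α) : P a ≤ P.map f (f a) := by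
  rw [PMF.map_apply]
  exact le_trans (by simp) (ENNReal.le_tsum a)

lemma map_apply_of_injective (P : PMF α) {f : α → β} (hf : f.Injective) (a : α) :
    P.map f (f a) = P a := by
  rw [PMF.map_apply, tsum_eq_single a fun b hb => if_neg fun h => hb (hf h).symm]
  simp

lemma map_apply_of_notMem_range (P : PMF α) {f : α → β} {b : β} (hb : b ∉ Set.range f) :
    P.map f b = 0 := by
  rw [PMF.map_apply, ENNReal.tsum_eq_zero]
  exact fun a => if_neg fun h => hb ⟨a, h.symm⟩

lemma entropy_map_of_injective (P : PMF α) {f : α → β} (hf : f.Injective) :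
    entropy (P.map f) = entropy P := by
  have hsupp : Function.support
      (fun b => ENNReal.ofReal (Real.negMulLog (P.map f b).toReal)) ⊆ Set.range f := by
    intro b hb
    by_contra hbf
    rw [Function.mem_support, map_apply_of_notMem_range P hbf] at hb
    simp at hb
  rw [entropy, entropy, ← hf.tsum_eq hsupp]
  simp only [map_apply_of_injective P hf]

lemma entropy_map_eq_tsum (P : PMF α) (f : α → β) :
    entropy (P.map f) = ∑' a, P a * ENNReal.ofReal (-Real.log (P.map f (f a)).toReal) := by
  rw [entropy, ← tsum_map_mul P f fun b => ENNReal.ofReal (-Real.log (P.map f b).toReal)]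
  refine tsum_congr fun b => ?_
  rw [Real.negMulLog, neg_mul, ← mul_neg, ENNReal.ofReal_mul ENNReal.toReal_nonneg,
    ENNReal.ofReal_toReal (PMF.apply_ne_top _ _)]

end PMF

section Marginal

variable {n : ℕ} (p : PMF (Fin n → ℕ))

-- `Finset.restrict₂` with its type family fixed to `ℕ`, so that it elaborates unannotated.
def proj {α β : Finset (Fin n)} (h : α ⊆ β) (y : ↥β → ℕ) : ↥α → ℕ :=
  fun i => y ⟨i.1, h i.2⟩

lemma proj_proj {α β γ : Finset (Fin n)} (hαβ : α ⊆ β) (hβγ : β ⊆ γ) (y : ↥γ → ℕ) :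
    proj hαβ (proj hβγ y) = proj (hαβ.trans hβγ) y :=
  rfl

lemma marginal_eq_map_restrict (α : Finset (Fin n)) : marginal p α = p.map α.restrict := rfl

lemma marginal_eq_map_proj {α β : Finset (Fin n)} (h : α ⊆ β) :
    marginal p α = (marginal p β).map (proj h) := by
  rw [marginal_eq_map_restrict, marginal_eq_map_restrict, PMF.map_comp]
  rfl

lemma apply_le_marginal (α : Finset (Fin n)) (x : Fin n → ℕ) :
    p x ≤ marginal p α (α.restrict x) :=
  apply_le_map_apply p _ x

lemma marginal_restrict_ne_zero {x : Fin n → ℕ} (hx : p x ≠ 0) (α : Finset (Fin n)) :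
    marginal p α (α.restrict x) ≠ 0 :=
  ne_bot_of_le_ne_bot hx (apply_le_marginal p α x)

lemma marginal_restrict_anti {α β : Finset (Fin n)} (h : α ⊆ β) (x : Fin n → ℕ) :
    marginal p β (β.restrict x) ≤ marginal p α (α.restrict x) := by
  rw [marginal_eq_map_proj p h]
  exact apply_le_map_apply (marginal p β) (proj h) (β.restrict x)

noncomputable def surprisal (α : Finset (Fin n)) (x : Fin n → ℕ) : ℝ :=
  -Real.log (marginal p α (α.restrict x)).toReal

lemma surprisal_nonneg (α : Finset (Fin n)) (x : Fin n → ℕ) : 0 ≤ surprisal p α x :=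
  neg_nonneg.2 (Real.log_nonpos ENNReal.toReal_nonneg (toReal_apply_le_one _ _))

lemma surprisal_anti {α β : Finset (Fin n)} (h : α ⊆ β) {x : Fin n → ℕ} (hx : p x ≠ 0) :
    surprisal p α x ≤ surprisal p β x := by
  refine neg_le_neg (Real.log_le_log (ENNReal.toReal_pos (marginal_restrict_ne_zero p hx β)
    (PMF.apply_ne_top _ _)) ?_)
  exact (ENNReal.toReal_le_toReal (PMF.apply_ne_top _ _) (PMF.apply_ne_top _ _)).2
    (marginal_restrict_anti p h x)

lemma entropy_marginal_eq_tsum (α : Finset (Fin n)) :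
    entropy (marginal p α) = ∑' x, p x * ENNReal.ofReal (surprisal p α x) :=
  entropy_map_eq_tsum p α.restrict

lemma entropy_marginal_mono {α β : Finset (Fin n)} (h : α ⊆ β) :
    entropy (marginal p α) ≤ entropy (marginal p β) := by
  simp only [entropy_marginal_eq_tsum]
  refine ENNReal.tsum_le_tsum fun x => ?_
  by_cases hx : p x = 0
  · simp [hx]
  · exact mul_le_mul_right (ENNReal.ofReal_le_ofReal (surprisal_anti p h hx)) _

end Marginal

section Submodular

variable {n : ℕ} (p : PMF (Fin n → ℕ)) (S A B : Finset (Fin n))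

noncomputable def condIndepRatio (x : Fin n → ℕ) : ℝ≥0∞ :=
  marginal p A (A.restrict x) * marginal p B (B.restrict x) /
    (marginal p (A ∪ B) ((A ∪ B).restrict x) * marginal p S (S.restrict x))

lemma condIndepRatio_ne_top {x : Fin n → ℕ} (hx : p x ≠ 0) : condIndepRatio p S A B x ≠ ⊤ :=
  ENNReal.div_ne_top (ENNReal.mul_ne_top (PMF.apply_ne_top _ _) (PMF.apply_ne_top _ _))
    (mul_ne_zero (marginal_restrict_ne_zero p hx _) (marginal_restrict_ne_zero p hx _))

lemma surprisal_add_le {x : Fin n → ℕ} (hx : p x ≠ 0) :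
    surprisal p (A ∪ B) x + surprisal p S x + 1 ≤
      surprisal p A x + surprisal p B x + (condIndepRatio p S A B x).toReal := by
  have hpos : ∀ γ, 0 < (marginal p γ (γ.restrict x)).toReal := fun γ =>
    ENNReal.toReal_pos (marginal_restrict_ne_zero p hx γ) (PMF.apply_ne_top _ _)
  have hA := hpos A
  have hB := hpos B
  have hU := hpos (A ∪ B)
  have hS := hpos S
  have hratio : (condIndepRatio p S A B x).toReal =
      (marginal p A (A.restrict x)).toReal * (marginal p B (B.restrict x)).toReal /
        ((marginal p (A ∪ B) ((A ∪ B).restrict x)).toReal *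
          (marginal p S (S.restrict x)).toReal) := by
    rw [condIndepRatio, ENNReal.toReal_div, ENNReal.toReal_mul, ENNReal.toReal_mul]
  have hlog : Real.log (condIndepRatio p S A B x).toReal =
      surprisal p (A ∪ B) x + surprisal p S x - surprisal p A x - surprisal p B x := by
    rw [hratio, Real.log_div (by positivity) (by positivity), Real.log_mul hA.ne' hB.ne',
      Real.log_mul hU.ne' hS.ne']
    simp only [surprisal]
    ring
  have := Real.log_le_sub_one_of_pos (show 0 < (condIndepRatio p S A B x).toReal by
    rw [hratio]; positivity)
  linarith

lemma mul_surprisal_add_le (x : Fin n → ℕ) :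
    p x * (ENNReal.ofReal (surprisal p (A ∪ B) x) + ENNReal.ofReal (surprisal p S x) + 1) ≤
      p x * (ENNReal.ofReal (surprisal p A x) + ENNReal.ofReal (surprisal p B x) +
        condIndepRatio p S A B x) := by
  by_cases hx : p x = 0
  · simp [hx]
  refine mul_le_mul_right ?_ _
  rw [← ENNReal.ofReal_toReal (condIndepRatio_ne_top p S A B hx), ← ENNReal.ofReal_one,
    ← ENNReal.ofReal_add (surprisal_nonneg p _ x) (surprisal_nonneg p _ x),
    ← ENNReal.ofReal_add (surprisal_nonneg p _ x) (surprisal_nonneg p _ x),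
    ← ENNReal.ofReal_add (add_nonneg (surprisal_nonneg p _ x) (surprisal_nonneg p _ x))
      zero_le_one,
    ← ENNReal.ofReal_add (add_nonneg (surprisal_nonneg p _ x) (surprisal_nonneg p _ x))
      ENNReal.toReal_nonneg]
  exact ENNReal.ofReal_le_ofReal (surprisal_add_le p S A B hx)


lemma tsum_compatible_pairs_le_one (hSA : S ⊆ A) (hSB : S ⊆ B) :
    ∑' z : (↥A → ℕ) × (↥B → ℕ), marginal p A z.1 / marginal p S (proj hSA z.1) *
      (if proj hSA z.1 = proj hSB z.2 then marginal p B z.2 else 0) ≤ 1 := by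
  have hfiber : ∀ a : ↥A → ℕ, ∑' b, (if proj hSA a = proj hSB b then marginal p B b else 0) =
      marginal p S (proj hSA a) := fun a => by
    rw [marginal_eq_map_proj p hSB, PMF.map_apply]
    congr! 3
  calc _ = ∑' a, marginal p A a / marginal p S (proj hSA a) * marginal p S (proj hSA a) := by
        rw [ENNReal.tsum_prod']
        simp only [ENNReal.tsum_mul_left, hfiber]
    _ ≤ ∑' a, marginal p A a := ENNReal.tsum_le_tsum fun a => by
        rw [mul_comm]
        exact ENNReal.mul_div_le
    _ = 1 := PMF.tsum_coe _

lemma tsum_mul_condIndepRatio_le_one (hSA : S ⊆ A) (hSB : S ⊆ B) :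
    ∑' x, p x * condIndepRatio p S A B x ≤ 1 := by
  have hAU : A ⊆ A ∪ B := Finset.subset_union_left
  have hBU : B ⊆ A ∪ B := Finset.subset_union_right
  let G : (↥(A ∪ B) → ℕ) → ℝ≥0∞ := fun y =>
    marginal p A (proj hAU y) * marginal p B (proj hBU y) /
      (marginal p (A ∪ B) y * marginal p S (proj (hSA.trans hAU) y))
  let F : (↥A → ℕ) × (↥B → ℕ) → ℝ≥0∞ := fun z =>
    marginal p A z.1 / marginal p S (proj hSA z.1) *
      if proj hSA z.1 = proj hSB z.2 then marginal p B z.2 else 0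
  let e : (↥(A ∪ B) → ℕ) → (↥A → ℕ) × (↥B → ℕ) := fun y => (proj hAU y, proj hBU y)
  have he : e.Injective := fun y y' h => funext fun i => by
    rcases Finset.mem_union.1 i.2 with hi | hi
    · exact congrFun (congrArg Prod.fst h) ⟨i, hi⟩
    · exact congrFun (congrArg Prod.snd h) ⟨i, hi⟩
  calc ∑' x, p x * condIndepRatio p S A B x
      = ∑' y, marginal p (A ∪ B) y * G y := (tsum_map_mul p (A ∪ B).restrict G).symm
    _ ≤ ∑' y, F (e y) := ENNReal.tsum_le_tsum fun y => by
        by_cases hy : marginal p (A ∪ B) y = 0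
        · simp [hy]
        simp only [F, e, G, proj_proj, ↓reduceIte]
        rw [← mul_div_assoc, ENNReal.mul_div_mul_left _ _ hy (PMF.apply_ne_top _ _),
          ENNReal.mul_div_right_comm]
    _ ≤ ∑' z, F z := ENNReal.tsum_comp_le_tsum_of_injective he F
    _ ≤ 1 := tsum_compatible_pairs_le_one p S A B hSA hSB

theorem entropy_marginal_union_add_le (hSA : S ⊆ A) (hSB : S ⊆ B) :
    entropy (marginal p (A ∪ B)) + entropy (marginal p S) ≤
      entropy (marginal p A) + entropy (marginal p B) := by
  refine (ENNReal.add_le_add_iff_right ENNReal.one_ne_top).1 ?_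
  calc entropy (marginal p (A ∪ B)) + entropy (marginal p S) + 1
      = ∑' x, p x * (ENNReal.ofReal (surprisal p (A ∪ B) x) +
          ENNReal.ofReal (surprisal p S x) + 1) := by
        simp only [mul_add, mul_one, ENNReal.tsum_add, entropy_marginal_eq_tsum, PMF.tsum_coe]
    _ ≤ ∑' x, p x * (ENNReal.ofReal (surprisal p A x) + ENNReal.ofReal (surprisal p B x) +
          condIndepRatio p S A B x) := ENNReal.tsum_le_tsum (mul_surprisal_add_le p S A B)
    _ = entropy (marginal p A) + entropy (marginal p B) +
          ∑' x, p x * condIndepRatio p S A B x := by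
        simp only [mul_add, ENNReal.tsum_add, entropy_marginal_eq_tsum]
    _ ≤ entropy (marginal p A) + entropy (marginal p B) + 1 := by
        gcongr
        exact tsum_mul_condIndepRatio_le_one p S A B hSA hSB

end Submodular

section Finite

variable {n : ℕ} (p : PMF (Fin n → ℕ))

lemma entropy_marginal_empty : entropy (marginal p ∅) = 0 := by
  have h1 : ∀ y, marginal p ∅ y = 1 := fun y => by
    rw [← (marginal p ∅).tsum_coe,
      tsum_eq_single y fun y' hy' => (hy' (Subsingleton.elim _ _)).elim]
  simp [entropy, h1]

lemma entropy_marginal_singleton (i : Fin n) :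
    entropy (marginal p {i}) = entropy (p.map fun x : Fin n → ℕ => x i) := by
  have hinj : Function.Injective fun (v : ℕ) (_ : ↥({i} : Finset (Fin n))) => v :=
    fun v w h => congrFun h ⟨i, Finset.mem_singleton_self i⟩
  have hcomp : ({i} : Finset (Fin n)).restrict =
      (fun (v : ℕ) (_ : ↥({i} : Finset (Fin n))) => v) ∘ fun x : Fin n → ℕ => x i := by
    funext x j
    simp [Finset.mem_singleton.1 j.2]
  rw [marginal_eq_map_restrict, hcomp, ← PMF.map_comp, entropy_map_of_injective _ hinj]

variable {p}

lemma entropy_marginal_ne_top (hp : FiniteEntropy p) (α : Finset (Fin n)) :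
    entropy (marginal p α) ≠ ⊤ := by
  induction α using Finset.induction_on with
  | empty => simp [entropy_marginal_empty]
  | @insert i s _ ih =>
    have hi : entropy (marginal p {i}) ≠ ⊤ := by
      rw [entropy_marginal_singleton, entropy,
        ← ENNReal.ofReal_tsum_of_nonneg (negMulLog_toReal_apply_nonneg _) (hp i)]
      exact ENNReal.ofReal_ne_top
    have h := entropy_marginal_union_add_le p ∅ {i} s (Finset.empty_subset _)
      (Finset.empty_subset _)
    rw [entropy_marginal_empty, add_zero, ← Finset.insert_eq] at h
    exact ne_top_of_le_ne_top (ENNReal.add_ne_top.2 ⟨hi, ih⟩) h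

lemma Hm_eq_toReal_entropy (α : Finset (Fin n)) : Hm p α = (entropy (marginal p α)).toReal := by
  rw [Hm, entropy, ENNReal.tsum_toReal_eq fun _ => ENNReal.ofReal_ne_top]
  exact tsum_congr fun y => (ENNReal.toReal_ofReal (negMulLog_toReal_apply_nonneg _ y)).symm

lemma Hm_mono (hp : FiniteEntropy p) {α β : Finset (Fin n)} (h : α ⊆ β) : Hm p α ≤ Hm p β := by
  rw [Hm_eq_toReal_entropy, Hm_eq_toReal_entropy]
  exact ENNReal.toReal_mono (entropy_marginal_ne_top hp β) (entropy_marginal_mono p h)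

lemma Hm_union_add_le (hp : FiniteEntropy p) {S A B : Finset (Fin n)} (hSA : S ⊆ A)
    (hSB : S ⊆ B) : Hm p (A ∪ B) + Hm p S ≤ Hm p A + Hm p B := by
  simp only [Hm_eq_toReal_entropy]
  rw [← ENNReal.toReal_add (entropy_marginal_ne_top hp _) (entropy_marginal_ne_top hp _),
    ← ENNReal.toReal_add (entropy_marginal_ne_top hp _) (entropy_marginal_ne_top hp _)]
  exact ENNReal.toReal_mono (ENNReal.add_ne_top.2 ⟨entropy_marginal_ne_top hp _,
    entropy_marginal_ne_top hp _⟩) (entropy_marginal_union_add_le p S A B hSA hSB)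

end Finite

section CondEntropy

variable {n : ℕ} {p : PMF (Fin n → ℕ)}

lemma Hc_empty (p : PMF (Fin n → ℕ)) (C : Finset (Fin n)) : Hc p ∅ C = 0 := by
  simp [Hc]

lemma Hc_nonneg (hp : FiniteEntropy p) (β α : Finset (Fin n)) : 0 ≤ Hc p β α :=
  sub_nonneg.2 (Hm_mono hp Finset.subset_union_right)

lemma Hc_mono (hp : FiniteEntropy p) {β β' : Finset (Fin n)} (h : β ⊆ β')
    (α : Finset (Fin n)) : Hc p β α ≤ Hc p β' α :=
  sub_le_sub_right (Hm_mono hp (Finset.union_subset_union h subset_rfl)) _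

lemma Hc_union_add_le (hp : FiniteEntropy p) {S A B : Finset (Fin n)} (hSA : S ⊆ A)
    (hSB : S ⊆ B) (C : Finset (Fin n)) :
    Hc p (A ∪ B) C + Hc p S C ≤ Hc p A C + Hc p B C := by
  have h := Hm_union_add_le hp (Finset.union_subset_union hSA (subset_refl C))
    (Finset.union_subset_union hSB (subset_refl C))
  rw [← Finset.union_union_distrib_right] at h
  simp only [Hc]
  linarith

lemma Hc_union_le (hp : FiniteEntropy p) (A B C : Finset (Fin n)) :
    Hc p (A ∪ B) C ≤ Hc p A C + Hc p B C := by
  simpa [Hc_empty] using Hc_union_add_le hp (Finset.empty_subset A) (Finset.empty_subset B) C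

lemma Hc_le_sum_singleton (hp : FiniteEntropy p) (I C : Finset (Fin n)) :
    Hc p I C ≤ ∑ q ∈ I, Hc p {q} C := by
  induction I using Finset.induction_on with
  | empty => simp [Hc_empty]
  | @insert i s hi ih =>
    rw [Finset.sum_insert hi, Finset.insert_eq]
    linarith [Hc_union_le hp {i} s C]

lemma Hc_sdiff_eq (hp : FiniteEntropy p) {I C : Finset (Fin n)} (hI : Hc p I C = 0)
    (Q : Finset (Fin n)) : Hc p (Q \ I) C = Hc p Q C := by
  have h1 := Hc_mono hp (Finset.sdiff_subset : Q \ I ⊆ Q) C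
  have h2 := Hc_mono hp (Finset.subset_union_left : Q ⊆ Q ∪ I) C
  have h3 := Hc_union_le hp (Q \ I) I C
  rw [Finset.sdiff_union_self_eq_union] at h3
  linarith

end CondEntropy

section MultisetFinset

variable {α : Type*} [DecidableEq α]

lemma sup_filter_ne_empty (s : Multiset (Finset α)) :
    (s.filter fun Q => Q ≠ ∅).sup = s.sup := by
  induction s using Multiset.induction_on with
  | empty => rfl
  | cons Q s ih =>
    by_cases hQ : Q = ∅
    · rw [Multiset.filter_cons_of_neg (p := fun Q => Q ≠ ∅) _ (not_not.2 hQ), ih,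
        Multiset.sup_cons, hQ]
      exact (Finset.empty_union _).symm
    · rw [Multiset.filter_cons_of_pos (p := fun Q => Q ≠ ∅) _ hQ, Multiset.sup_cons,
        Multiset.sup_cons, ih]

lemma sum_map_filter_ne_empty {M : Type*} [AddCommMonoid M] {f : Finset α → M}
    (s : Multiset (Finset α)) (hf : f ∅ = 0) : ((s.filter fun Q => Q ≠ ∅).map f).sum = (s.map f).sum := by
  induction s using Multiset.induction_on with
  | empty => rfl
  | cons Q s ih =>
    by_cases hQ : Q = ∅
    · rw [Multiset.filter_cons_of_neg (p := fun Q => Q ≠ ∅) _ (not_not.2 hQ), ih,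
        Multiset.map_cons, Multiset.sum_cons, hQ, hf, zero_add]
    · rw [Multiset.filter_cons_of_pos (p := fun Q => Q ≠ ∅) _ hQ, Multiset.map_cons,
        Multiset.map_cons, Multiset.sum_cons, Multiset.sum_cons, ih]

lemma sup_map_sdiff (s : Multiset (Finset α)) (I : Finset α) :
    (s.map fun Q => Q \ I).sup = s.sup \ I := by
  induction s using Multiset.induction_on with
  | empty => simp
  | cons Q s ih => simp [ih, Finset.union_sdiff_distrib]

end MultisetFinset

section MutualInformation

variable {n : ℕ} {p : PMF (Fin n → ℕ)}

lemma J_pair (p : PMF (Fin n → ℕ)) (C Q₁ Q₂ : Finset (Fin n)) :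
    J p C {Q₁, Q₂} = Hc p Q₁ C + Hc p Q₂ C - Hc p (Q₁ ∪ Q₂) C := by
  simp only [J, Multiset.insert_eq_cons, Multiset.map_cons, Multiset.map_singleton,
    Multiset.sum_cons, Multiset.sum_singleton, Multiset.sup_cons, Multiset.sup_singleton,
    Finset.sup_eq_union]

lemma J_le_J_cons (hp : FiniteEntropy p) (C Q : Finset (Fin n))
    (s : Multiset (Finset (Fin n))) : J p C s ≤ J p C (Q ::ₘ s) := by
  simp only [J, Multiset.map_cons, Multiset.sum_cons, Multiset.sup_cons, Finset.sup_eq_union]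
  linarith [Hc_union_le hp Q s.sup C]

lemma J_mono (hp : FiniteEntropy p) (C : Finset (Fin n)) {s t : Multiset (Finset (Fin n))}
    (h : s ≤ t) : J p C s ≤ J p C t := by
  obtain ⟨u, rfl⟩ := Multiset.le_iff_exists_add.1 h
  induction u using Multiset.induction_on with
  | empty => simp
  | cons Q u ih =>
    rw [Multiset.add_cons]
    exact (ih (Multiset.le_add_right _ _)).trans (J_le_J_cons hp C Q _)

lemma J_filter_ne_empty (p : PMF (Fin n → ℕ)) (C : Finset (Fin n))
    (s : Multiset (Finset (Fin n))) : J p C (s.filter fun Q => Q ≠ ∅) = J p C s := by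
  rw [J, J, sum_map_filter_ne_empty _ (Hc_empty p C), sup_filter_ne_empty]

lemma J_map_sdiff (hp : FiniteEntropy p) {I C : Finset (Fin n)} (hI : Hc p I C = 0)
    (s : Multiset (Finset (Fin n))) : J p C (s.map fun Q => Q \ I) = J p C s := by
  simp only [J, Multiset.map_map, Function.comp_def, Hc_sdiff_eq hp hI, sup_map_sdiff]

end MutualInformation

section RepeatedIndices

variable {n : ℕ} {p : PMF (Fin n → ℕ)}

lemma exists_pair_le_of_mem_repSet {K : CMI n} {q : Fin n} (hq : q ∈ repSet K) :
    ∃ Q₁ Q₂, {Q₁, Q₂} ≤ K.Qs ∧ q ∈ Q₁ ∧ q ∈ Q₂ := by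
  have h2 : 2 ≤ Multiset.card (K.Qs.filter fun Q => q ∈ Q) := by simpa [repSet] using hq
  obtain ⟨Q₁, hQ₁⟩ := Multiset.card_pos_iff_exists_mem.1
    (by omega : 0 < Multiset.card (K.Qs.filter fun Q => q ∈ Q))
  obtain ⟨F, hF⟩ := Multiset.exists_cons_of_mem hQ₁
  rw [hF, Multiset.card_cons] at h2
  obtain ⟨Q₂, hQ₂⟩ := Multiset.card_pos_iff_exists_mem.1 (by omega : 0 < Multiset.card F)
  have hle : {Q₁, Q₂} ≤ K.Qs.filter fun Q => q ∈ Q := by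
    rw [hF, Multiset.insert_eq_cons]
    exact Multiset.cons_le_cons _ (Multiset.singleton_le.2 hQ₂)
  have hmem : ∀ Q ∈ ({Q₁, Q₂} : Multiset (Finset (Fin n))), q ∈ Q := fun Q hQ =>
    (Multiset.mem_filter.1 (Multiset.mem_of_le hle hQ)).2
  exact ⟨Q₁, Q₂, hle.trans (Multiset.filter_le _ _), hmem Q₁ (by simp), hmem Q₂ (by simp)⟩

lemma Hc_singleton_le_J (hp : FiniteEntropy p) {K : CMI n} {q : Fin n} (hq : q ∈ repSet K) :
    Hc p {q} K.C ≤ J p K.C K.Qs := by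
  obtain ⟨Q₁, Q₂, hle, hq₁, hq₂⟩ := exists_pair_le_of_mem_repSet hq
  have hsub := Hc_union_add_le hp (Finset.singleton_subset_iff.2 hq₁)
    (Finset.singleton_subset_iff.2 hq₂) K.C
  have hmono := J_mono hp K.C hle
  rw [J_pair] at hmono
  linarith

lemma Hc_repSet_eq_zero (hp : FiniteEntropy p) {K : CMI n} (hK : Valid p K) :
    Hc p (repSet K) K.C = 0 := by
  refine le_antisymm ?_ (Hc_nonneg hp _ _)
  calc Hc p (repSet K) K.C ≤ ∑ q ∈ repSet K, Hc p {q} K.C := Hc_le_sum_singleton hp _ _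
    _ ≤ ∑ _q ∈ repSet K, J p K.C K.Qs := Finset.sum_le_sum fun q hq => Hc_singleton_le_J hp hq
    _ = 0 := by rw [show J p K.C K.Qs = 0 from hK, Finset.sum_const_zero]

lemma J_parts_eq (hp : FiniteEntropy p) {K : CMI n} (hI : Hc p (repSet K) K.C = 0) :
    J p K.C (parts K) = J p K.C K.Qs := by
  rw [parts, J_filter_ne_empty, J_map_sdiff hp hI]

end RepeatedIndices

theorem stmt6_general {n : ℕ} (K : CMI n)
    (p : PMF (Fin n → ℕ)) (hp : FiniteEntropy p) :
    (Valid p K ↔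
      (Valid p ⟨K.C, {repSet K, repSet K}⟩ ∧ Valid p ⟨K.C, parts K⟩)) ∧
    (Valid p K ↔ (Hc p (repSet K) K.C = 0 ∧ J p K.C (parts K) = 0)) := by
  have hrep : Valid p ⟨K.C, {repSet K, repSet K}⟩ ↔ Hc p (repSet K) K.C = 0 := by
    rw [Valid, J_pair, Finset.union_self, add_sub_cancel_right]
  have hvalid : Valid p K ↔ Hc p (repSet K) K.C = 0 ∧ J p K.C (parts K) = 0 := by
    refine ⟨fun hK => ?_, fun ⟨hI, hP⟩ => ?_⟩
    · have hI := Hc_repSet_eq_zero hp hK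
      exact ⟨hI, (J_parts_eq hp hI).trans hK⟩
    · exact (J_parts_eq hp hI).symm.trans hP
  exact ⟨hvalid.trans (and_congr hrep.symm Iff.rfl), hvalid⟩

/-- a pure-form `K` is valid iff both `(C,⟨𝕀_K,𝕀_K⟩)` and
`(C,⟨P_1,…,P_t⟩)` are valid; equivalently, iff `H(X_{𝕀_K}|X_C) = 0` and
`J(X_{P_i},1≤i≤t|X_C) = 0`. -/
theorem stmt6 {n : ℕ} (K : CMI n) (hpure : IsPure K)
    (p : PMF (Fin n → ℕ)) (hp : FiniteEntropy p) :
    (Valid p K ↔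
      (Valid p ⟨K.C, {repSet K, repSet K}⟩ ∧ Valid p ⟨K.C, parts K⟩)) ∧
    (Valid p K ↔ (Hc p (repSet K) K.C = 0 ∧ J p K.C (parts K) = 0)) :=
  stmt6_general K p hp

end Paper
end

section
/- Let K and K' be non-degenerate pure-form CMIs with can(K) = (C, ⟨𝕀_K, 𝕀_K, P_1,…,P_t⟩) and can(K') = (C', ⟨𝕀_{K'}, 𝕀_{K'}, P'_1,…,P'_s⟩) (general notation). If K ∼ K', then the multisets ⟨P_1,…,P_t⟩ and ⟨P'_1,…,P'_s⟩ are equal. -/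
open scoped Classical

namespace Paper

variable {n : ℕ}

/-! ### Auxiliary: single-bit distributions and their entropies -/

lemma map_unif_apply {β : Type*} (f : Bool → β) (y : β) :
    (PMF.map f (PMF.uniformOfFintype Bool)) y
      = (if y = f false then 2⁻¹ else 0) + (if y = f true then 2⁻¹ else 0) := by
  rw [PMF.map_apply, tsum_bool]
  simp [PMF.uniformOfFintype_apply]

lemma ent_map_bool {β : Type*} (f : Bool → β) :
    ∑' y, Real.negMulLog ((PMF.map f (PMF.uniformOfFintype Bool)) y).toReal
      = if f true = f false then 0 else Real.log 2 := by
  by_cases h : f true = f false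
  · rw [if_pos h]
    have : ∀ y, Real.negMulLog ((PMF.map f (PMF.uniformOfFintype Bool)) y).toReal = 0 := by
      intro y
      rw [map_unif_apply]
      by_cases hy : y = f false
      · rw [if_pos hy, if_pos (h ▸ hy)]
        have : ((2⁻¹ : ENNReal) + 2⁻¹) = 1 := by
          rw [← two_mul]; rw [ENNReal.mul_inv_cancel] <;> norm_num
        rw [this]
        simp [Real.negMulLog]
      · rw [if_neg hy, if_neg (fun hc => hy (h ▸ hc))]
        simp [Real.negMulLog]
    rw [tsum_congr this, tsum_zero]
  · rw [if_neg h]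
    have hne : f false ≠ f true := fun hc => h hc.symm
    rw [tsum_eq_sum (s := ({f false, f true} : Finset β))
      (by
        intro y hy
        simp only [Finset.mem_insert, Finset.mem_singleton, not_or] at hy
        rw [map_unif_apply, if_neg hy.1, if_neg hy.2]
        simp [Real.negMulLog])]
    rw [Finset.sum_pair hne]
    rw [map_unif_apply, map_unif_apply, if_pos rfl, if_neg hne, if_pos rfl,
      if_neg (fun hc => hne hc.symm)]
    simp only [add_zero, zero_add]
    rw [ENNReal.toReal_inv]
    norm_num
    rw [Real.negMulLog, Real.log_div one_ne_zero (by norm_num), Real.log_one]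
    ring

/-- The distribution where all coordinates in `S` are one common uniform bit and the
other coordinates are constantly `0`. -/
noncomputable def pS (S : Finset (Fin n)) : PMF (Fin n → ℕ) :=
  (PMF.uniformOfFintype Bool).map (fun b i => if i ∈ S then (if b then 1 else 0) else 0)

lemma Hm_pS (S α : Finset (Fin n)) :
    Hm (pS S) α = if (α ∩ S).Nonempty then Real.log 2 else 0 := by
  unfold Hm marginal pS
  rw [PMF.map_comp]
  rw [ent_map_bool]
  by_cases hne : (α ∩ S).Nonempty
  · rw [if_pos hne, if_neg]
    intro hc
    obtain ⟨i, hi⟩ := hne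
    rw [Finset.mem_inter] at hi
    have := congrFun hc ⟨i, hi.1⟩
    simp only [Function.comp_apply, if_pos hi.2] at this
    exact one_ne_zero this
  · rw [if_neg hne, if_pos]
    funext i
    have hiS : i.1 ∉ S := fun hc => hne ⟨i.1, Finset.mem_inter.mpr ⟨i.2, hc⟩⟩
    simp [Function.comp_apply, hiS]

lemma finiteEntropy_pS (S : Finset (Fin n)) : FiniteEntropy (pS S) := by
  intro i
  apply summable_of_ne_finset_zero (s := ({0, 1} : Finset ℕ))
  intro y hy
  simp only [Finset.mem_insert, Finset.mem_singleton, not_or] at hy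
  have : (pS S).map (fun x => x i) =
      (PMF.uniformOfFintype Bool).map
        (fun b => if i ∈ S then (if b then 1 else 0) else 0) := by
    unfold pS
    rw [PMF.map_comp]
    rfl
  rw [this, map_unif_apply]
  have h0 : ∀ b : Bool, y ≠ (if i ∈ S then (if b then (1:ℕ) else 0) else 0) := by
    intro b
    by_cases hiS : i ∈ S <;> cases b <;> simp [hiS, hy.1, hy.2]
  rw [if_neg (h0 false), if_neg (h0 true)]
  simp [Real.negMulLog]
lemma Hc_pS (S β α : Finset (Fin n)) :
    Hc (pS S) β α = (if ((β ∪ α) ∩ S).Nonempty then Real.log 2 else 0)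
      - (if (α ∩ S).Nonempty then Real.log 2 else 0) := by
  unfold Hc
  rw [Hm_pS, Hm_pS]

lemma sum_map_ite {X : Type*} (s : Multiset X) (P : X → Prop) [DecidablePred P] (c : ℝ) :
    (s.map fun x => if P x then c else 0).sum
      = (Multiset.card (s.filter P)) * c := by
  induction s using Multiset.induction_on with
  | empty => simp
  | cons x t ih =>
    by_cases hx : P x
    · rw [Multiset.map_cons, Multiset.sum_cons, ih, Multiset.filter_cons_of_pos _ hx,
        Multiset.card_cons, if_pos hx]
      push_cast
      ring
    · rw [Multiset.map_cons, Multiset.sum_cons, ih, Multiset.filter_cons_of_neg _ hx,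
        if_neg hx, zero_add]

lemma mem_msup {X : Type*} [DecidableEq X] {s : Multiset (Finset X)} {a : X} :
    a ∈ s.sup ↔ ∃ Q ∈ s, a ∈ Q := by
  induction s using Multiset.induction_on with
  | empty => simp
  | cons x t ih =>
    rw [Multiset.sup_cons]
    simp only [Finset.mem_union, Finset.sup_eq_union, ih, Multiset.mem_cons]
    constructor
    · rintro (h | ⟨Q, hQ, hQ2⟩)
      · exact ⟨x, Or.inl rfl, h⟩
      · exact ⟨Q, Or.inr hQ, hQ2⟩
    · rintro ⟨Q, (rfl | hQ), hQ2⟩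
      · exact Or.inl hQ2
      · exact Or.inr ⟨Q, hQ, hQ2⟩

lemma valid_pS (S : Finset (Fin n)) (K : CMI n) :
    Valid (pS S) K ↔ ((K.C ∩ S).Nonempty ∨
      Multiset.card (K.Qs.filter fun Q => (Q ∩ S).Nonempty) ≤ 1) := by
  have hlog : Real.log 2 ≠ 0 := ne_of_gt (Real.log_pos (by norm_num))
  unfold Valid J
  by_cases hC : (K.C ∩ S).Nonempty
  · have hall : ∀ β : Finset (Fin n), Hc (pS S) β K.C = 0 := by
      intro β
      rw [Hc_pS]
      have h1 : ((β ∪ K.C) ∩ S).Nonempty := by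
        obtain ⟨c, hc⟩ := hC
        rw [Finset.mem_inter] at hc
        exact ⟨c, Finset.mem_inter.mpr ⟨Finset.mem_union_right _ hc.1, hc.2⟩⟩
      rw [if_pos h1, if_pos hC, sub_self]
    have hsum : (K.Qs.map fun Q => Hc (pS S) Q K.C).sum = 0 := by
      apply Multiset.sum_eq_zero
      intro x hx
      obtain ⟨Q, _, rfl⟩ := Multiset.mem_map.mp hx
      exact hall Q
    rw [hsum, hall, sub_zero]
    simp [hC]
  · have hCe : K.C ∩ S = ∅ := Finset.not_nonempty_iff_eq_empty.mp hC
    have hQ : ∀ β : Finset (Fin n), ((β ∪ K.C) ∩ S) = β ∩ S := by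
      intro β
      rw [Finset.union_inter_distrib_right, hCe, Finset.union_empty]
    have hHc : ∀ β : Finset (Fin n),
        Hc (pS S) β K.C = if (β ∩ S).Nonempty then Real.log 2 else 0 := by
      intro β
      rw [Hc_pS, hQ, if_neg hC, sub_zero]
    have hmap : (K.Qs.map fun Q => Hc (pS S) Q K.C)
        = K.Qs.map fun Q => if (Q ∩ S).Nonempty then Real.log 2 else 0 :=
      Multiset.map_congr rfl (fun Q _ => hHc Q)
    rw [hmap, sum_map_ite, hHc]
    set m := Multiset.card (K.Qs.filter fun Q => (Q ∩ S).Nonempty) with hm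
    have hsup : (K.Qs.sup ∩ S).Nonempty ↔ 1 ≤ m := by
      constructor
      · rintro ⟨a, ha⟩
        rw [Finset.mem_inter] at ha
        obtain ⟨Q, hQm, haQ⟩ := mem_msup.mp ha.1
        have : Q ∈ K.Qs.filter fun Q => (Q ∩ S).Nonempty :=
          Multiset.mem_filter.mpr ⟨hQm, ⟨a, Finset.mem_inter.mpr ⟨haQ, ha.2⟩⟩⟩
        calc 1 ≤ Multiset.count Q (K.Qs.filter fun Q => (Q ∩ S).Nonempty) :=
              Multiset.one_le_count_iff_mem.mpr this
          _ ≤ m := Multiset.count_le_card _ _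
      · intro h1
        have : (K.Qs.filter fun Q => (Q ∩ S).Nonempty) ≠ 0 := by
          intro h0
          rw [hm, h0] at h1
          simp at h1
        obtain ⟨Q, hQ⟩ := Multiset.exists_mem_of_ne_zero this
        rw [Multiset.mem_filter] at hQ
        obtain ⟨a, ha⟩ := hQ.2
        rw [Finset.mem_inter] at ha
        exact ⟨a, Finset.mem_inter.mpr ⟨mem_msup.mpr ⟨Q, hQ.1, ha.1⟩, ha.2⟩⟩
    constructor
    · intro hJ
      right
      by_contra hm2
      push_neg at hm2
      have h1 : 1 ≤ m := le_trans (by norm_num) hm2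
      rw [if_pos (hsup.mpr h1)] at hJ
      have : ((m : ℝ) - 1) * Real.log 2 = 0 := by linarith
      rcases mul_eq_zero.mp this with h | h
      · have : (m : ℝ) ≥ 2 := by exact_mod_cast hm2
        linarith
      · exact hlog h
    · intro hor
      rcases hor with hor | hm1
      · exact absurd hor hC
      · interval_cases m
        · rw [if_neg]
          · simp
          · rw [hsup]; norm_num
        · rw [if_pos (hsup.mpr le_rfl)]
          norm_num
/-! ### Multiset helpers -/

lemma two_le_card_of_two_mem {X : Type*} {s : Multiset X} {x y : X}
    (hxy : x ≠ y) (hx : x ∈ s) (hy : y ∈ s) : 2 ≤ Multiset.card s := by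
  obtain ⟨t, rfl⟩ := Multiset.exists_cons_of_mem hx
  have hyt : y ∈ t := by
    rcases Multiset.mem_cons.mp hy with h | h
    · exact absurd h.symm hxy
    · exact h
  rw [Multiset.card_cons]
  have := Multiset.card_pos_iff_exists_mem.mpr ⟨y, hyt⟩
  omega

lemma exists_two {X : Type*} {s : Multiset X} (h : 2 ≤ Multiset.card s) :
    ∃ x y t, s = x ::ₘ y ::ₘ t := by
  have hs : s ≠ 0 := by
    intro h0; rw [h0] at h; simp at h
  obtain ⟨x, hx⟩ := Multiset.exists_mem_of_ne_zero hs
  obtain ⟨t, rfl⟩ := Multiset.exists_cons_of_mem hx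
  have ht : t ≠ 0 := by
    intro h0
    rw [h0] at h
    simp at h
  obtain ⟨y, hy⟩ := Multiset.exists_mem_of_ne_zero ht
  obtain ⟨t', rfl⟩ := Multiset.exists_cons_of_mem hy
  exact ⟨x, y, t', rfl⟩

/-! ### Facts about `repSet` and `parts` -/

lemma mem_repSet {K : CMI n} {a : Fin n} :
    a ∈ repSet K ↔ 2 ≤ Multiset.card (K.Qs.filter fun Q => a ∈ Q) := by
  simp [repSet]

lemma not_mem_C_of_mem_repSet {K : CMI n} (hK : IsPure K) {a : Fin n}
    (ha : a ∈ repSet K) : a ∉ K.C := by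
  intro haC
  have h2 := mem_repSet.mp ha
  have hne : (K.Qs.filter fun Q => a ∈ Q) ≠ 0 := by
    intro h0; rw [h0] at h2; simp at h2
  obtain ⟨Q, hQ⟩ := Multiset.exists_mem_of_ne_zero hne
  rw [Multiset.mem_filter] at hQ
  have := (hK Q hQ.1).2
  have : a ∈ Q ∩ K.C := Finset.mem_inter.mpr ⟨hQ.2, haC⟩
  rw [(hK Q hQ.1).2] at this
  exact absurd this (Finset.notMem_empty a)

lemma mem_parts {K : CMI n} {P : Finset (Fin n)} :
    P ∈ parts K ↔ (∃ Q ∈ K.Qs, Q \ repSet K = P) ∧ P ≠ ∅ := by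
  simp [parts, Multiset.mem_filter, Multiset.mem_map]

lemma not_mem_repSet_of_mem_parts {K : CMI n} {P : Finset (Fin n)} {a : Fin n}
    (hP : P ∈ parts K) (ha : a ∈ P) : a ∉ repSet K := by
  obtain ⟨⟨Q, _, rfl⟩, _⟩ := mem_parts.mp hP
  exact (Finset.mem_sdiff.mp ha).2

lemma mem_Qs_of_mem_parts {K : CMI n} {P : Finset (Fin n)}
    (hP : P ∈ parts K) : ∃ Q ∈ K.Qs, Q \ repSet K = P ∧ P ⊆ Q := by
  obtain ⟨⟨Q, hQ, rfl⟩, _⟩ := mem_parts.mp hP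
  exact ⟨Q, hQ, rfl, Finset.sdiff_subset⟩

lemma not_mem_C_of_mem_parts {K : CMI n} (hK : IsPure K) {P : Finset (Fin n)} {a : Fin n}
    (hP : P ∈ parts K) (ha : a ∈ P) : a ∉ K.C := by
  obtain ⟨Q, hQ, _, hsub⟩ := mem_Qs_of_mem_parts hP
  intro haC
  have : a ∈ Q ∩ K.C := Finset.mem_inter.mpr ⟨hsub ha, haC⟩
  rw [(hK Q hQ).2] at this
  exact absurd this (Finset.notMem_empty a)

lemma part_unique {K : CMI n} {P P' : Finset (Fin n)} {a : Fin n}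
    (hP : P ∈ parts K) (hP' : P' ∈ parts K) (ha : a ∈ P) (ha' : a ∈ P') : P = P' := by
  by_contra hne
  obtain ⟨Q, hQ, hQP, hPQ⟩ := mem_Qs_of_mem_parts hP
  obtain ⟨Q', hQ', hQP', hPQ'⟩ := mem_Qs_of_mem_parts hP'
  have hQQ' : Q ≠ Q' := by
    intro hc; rw [hc, hQP'] at hQP; exact hne hQP.symm
  have haR : a ∈ repSet K := by
    rw [mem_repSet]
    refine two_le_card_of_two_mem hQQ' ?_ ?_
    · exact Multiset.mem_filter.mpr ⟨hQ, hPQ ha⟩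
    · exact Multiset.mem_filter.mpr ⟨hQ', hPQ' ha'⟩
  exact not_mem_repSet_of_mem_parts hP ha haR

lemma count_parts_le_one (K : CMI n) (P : Finset (Fin n)) :
    Multiset.count P (parts K) ≤ 1 := by
  unfold parts
  by_cases hP : P = ∅
  · rw [Multiset.count_filter]
    rw [if_neg (by simp [hP])]
    norm_num
  · by_contra hc
    push_neg at hc
    rw [Multiset.count_filter, if_pos (Finset.nonempty_iff_ne_empty.mpr hP), Multiset.count_map] at hc
    set sub := K.Qs.filter fun Q => P = Q \ repSet K with hsub
    have h2 : 2 ≤ Multiset.card sub := hc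
    obtain ⟨a, ha⟩ := Finset.nonempty_iff_ne_empty.mpr hP
    have hle : sub ≤ K.Qs.filter fun Q => a ∈ Q := by
      rw [Multiset.le_filter]
      constructor
      · exact le_trans (Multiset.filter_le _ _) le_rfl
      · intro Q hQ
        rw [hsub, Multiset.mem_filter] at hQ
        have : a ∈ Q \ repSet K := hQ.2 ▸ ha
        exact (Finset.mem_sdiff.mp this).1
    have haR : a ∈ repSet K := by
      rw [mem_repSet]
      calc 2 ≤ Multiset.card sub := h2
        _ ≤ _ := Multiset.card_le_card hle
    obtain ⟨Q, hQm⟩ := Multiset.exists_mem_of_ne_zero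
      (show sub ≠ 0 by intro h0; rw [h0] at h2; simp at h2)
    rw [hsub, Multiset.mem_filter] at hQm
    have : a ∈ Q \ repSet K := hQm.2 ▸ ha
    exact (Finset.mem_sdiff.mp this).2 haR

lemma parts_nodup (K : CMI n) : (parts K).Nodup :=
  Multiset.nodup_iff_count_le_one.mpr (count_parts_le_one K)

/-- The separation relation: `a` and `b` lie in two distinct parts. -/
def Rr (K : CMI n) (a b : Fin n) : Prop :=
  ∃ P P', P ∈ parts K ∧ P' ∈ parts K ∧ P ≠ P' ∧ a ∈ P ∧ b ∈ P'
lemma singleton_char {K : CMI n} (hK : IsPure K) (a : Fin n) :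
    ¬ ((K.C ∩ {a}).Nonempty ∨
        Multiset.card (K.Qs.filter fun Q => (Q ∩ {a}).Nonempty) ≤ 1)
      ↔ a ∈ repSet K := by
  have hfilter : (K.Qs.filter fun Q => (Q ∩ ({a} : Finset (Fin n))).Nonempty)
      = K.Qs.filter fun Q => a ∈ Q := by
    apply Multiset.filter_congr
    intro Q _
    constructor
    · rintro ⟨x, hx⟩
      rw [Finset.mem_inter, Finset.mem_singleton] at hx
      exact hx.2 ▸ hx.1
    · intro haQ
      exact ⟨a, Finset.mem_inter.mpr ⟨haQ, Finset.mem_singleton_self a⟩⟩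
  rw [hfilter]
  push_neg
  constructor
  · intro ⟨_, h2⟩
    exact mem_repSet.mpr h2
  · intro haR
    refine ⟨?_, lt_of_lt_of_le one_lt_two (mem_repSet.mp haR)⟩
    rw [Finset.eq_empty_iff_forall_notMem]; intro x hx
    rw [Finset.mem_inter, Finset.mem_singleton] at hx
    exact not_mem_C_of_mem_repSet hK haR (hx.2 ▸ hx.1)

lemma pair_char {K : CMI n} (hK : IsPure K) {a b : Fin n} (hab : a ≠ b)
    (haI : a ∉ repSet K) (hbI : b ∉ repSet K) :
    ¬ ((K.C ∩ {a, b}).Nonempty ∨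
        Multiset.card (K.Qs.filter fun Q => (Q ∩ {a, b}).Nonempty) ≤ 1)
      ↔ Rr K a b := by
  push_neg
  constructor
  · rintro ⟨-, h2⟩
    rw [Nat.lt_iff_add_one_le] at h2
    obtain ⟨Q, Q', t, hF⟩ := exists_two h2
    have hQF : Q ∈ K.Qs.filter fun Q => (Q ∩ ({a, b} : Finset (Fin n))).Nonempty := by
      rw [hF]; exact Multiset.mem_cons_self _ _
    have hQ'F : Q' ∈ K.Qs.filter fun Q => (Q ∩ ({a, b} : Finset (Fin n))).Nonempty := by
      rw [hF]; exact Multiset.mem_cons_of_mem (Multiset.mem_cons_self _ _)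
    rw [Multiset.mem_filter] at hQF hQ'F
    have hmeet : ∀ {R : Finset (Fin n)}, (R ∩ ({a, b} : Finset (Fin n))).Nonempty →
        a ∈ R ∨ b ∈ R := by
      rintro R ⟨x, hx⟩
      rw [Finset.mem_inter, Finset.mem_insert, Finset.mem_singleton] at hx
      rcases hx.2 with rfl | rfl
      · exact Or.inl hx.1
      · exact Or.inr hx.1
    by_cases hQQ' : Q = Q'
    · -- multiplicity ≥ 2 of the same set: some repeated index, contradiction
      exfalso
      have hcount : 2 ≤ Multiset.count Q
          (K.Qs.filter fun Q => (Q ∩ ({a, b} : Finset (Fin n))).Nonempty) := by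
        rw [hF, ← hQQ', Multiset.count_cons_self, Multiset.count_cons_self]
        omega
      have hcQs : 2 ≤ Multiset.count Q K.Qs :=
        le_trans hcount (Multiset.count_le_of_le _ (Multiset.filter_le _ _))
      rcases hmeet hQF.2 with hx | hx
      · apply haI
        rw [mem_repSet]
        calc 2 ≤ Multiset.count Q K.Qs := hcQs
          _ = Multiset.count Q (K.Qs.filter fun Q => a ∈ Q) := by
            rw [Multiset.count_filter, if_pos hx]
          _ ≤ _ := Multiset.count_le_card _ _
      · apply hbI
        rw [mem_repSet]
        calc 2 ≤ Multiset.count Q K.Qs := hcQs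
          _ = Multiset.count Q (K.Qs.filter fun Q => b ∈ Q) := by
            rw [Multiset.count_filter, if_pos hx]
          _ ≤ _ := Multiset.count_le_card _ _
    · have hnotboth_a : ¬ (a ∈ Q ∧ a ∈ Q') := by
        rintro ⟨h1, h2'⟩
        apply haI
        rw [mem_repSet]
        exact two_le_card_of_two_mem hQQ' (Multiset.mem_filter.mpr ⟨hQF.1, h1⟩)
          (Multiset.mem_filter.mpr ⟨hQ'F.1, h2'⟩)
      have hnotboth_b : ¬ (b ∈ Q ∧ b ∈ Q') := by
        rintro ⟨h1, h2'⟩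
        apply hbI
        rw [mem_repSet]
        exact two_le_card_of_two_mem hQQ' (Multiset.mem_filter.mpr ⟨hQF.1, h1⟩)
          (Multiset.mem_filter.mpr ⟨hQ'F.1, h2'⟩)
      have hmk : ∀ {R R' : Finset (Fin n)}, R ∈ K.Qs → R' ∈ K.Qs →
          a ∈ R → b ∈ R' → a ∉ R' → Rr K a b := by
        intro R R' hR hR' haR hbR' haR'
        refine ⟨R \ repSet K, R' \ repSet K, ?_, ?_, ?_, ?_, ?_⟩
        · exact mem_parts.mpr ⟨⟨R, hR, rfl⟩,
            Finset.nonempty_iff_ne_empty.mp ⟨a, Finset.mem_sdiff.mpr ⟨haR, haI⟩⟩⟩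
        · exact mem_parts.mpr ⟨⟨R', hR', rfl⟩,
            Finset.nonempty_iff_ne_empty.mp ⟨b, Finset.mem_sdiff.mpr ⟨hbR', hbI⟩⟩⟩
        · intro hc
          have : a ∈ R' \ repSet K := hc ▸ Finset.mem_sdiff.mpr ⟨haR, haI⟩
          exact haR' (Finset.mem_sdiff.mp this).1
        · exact Finset.mem_sdiff.mpr ⟨haR, haI⟩
        · exact Finset.mem_sdiff.mpr ⟨hbR', hbI⟩
      by_cases haQ : a ∈ Q
      · by_cases haQ' : a ∈ Q'
        · exact absurd ⟨haQ, haQ'⟩ hnotboth_a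
        · rcases hmeet hQ'F.2 with h | h
          · exact absurd h haQ'
          · exact hmk hQF.1 hQ'F.1 haQ h haQ'
      · have hbQ : b ∈ Q := by
          rcases hmeet hQF.2 with h | h
          · exact absurd h haQ
          · exact h
        have hbQ' : b ∉ Q' := fun hc => hnotboth_b ⟨hbQ, hc⟩
        have haQ' : a ∈ Q' := by
          rcases hmeet hQ'F.2 with h | h
          · exact h
          · exact absurd h hbQ'
        obtain ⟨P, P', h1, h2', h3, h4, h5⟩ := hmk hQ'F.1 hQF.1 haQ' hbQ haQ
        exact ⟨P, P', h1, h2', h3, h4, h5⟩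
  · rintro ⟨P, P', hP, hP', hPP', haP, hbP'⟩
    obtain ⟨Q, hQ, hQP, hPQ⟩ := mem_Qs_of_mem_parts hP
    obtain ⟨Q', hQ', hQP', hPQ'⟩ := mem_Qs_of_mem_parts hP'
    have hQQ' : Q ≠ Q' := by
      intro hc; rw [hc, hQP'] at hQP; exact hPP' hQP.symm
    constructor
    · rw [Finset.eq_empty_iff_forall_notMem]
      intro x hx
      rw [Finset.mem_inter, Finset.mem_insert, Finset.mem_singleton] at hx
      rcases hx.2 with rfl | rfl
      · exact not_mem_C_of_mem_parts hK hP haP hx.1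
      · exact not_mem_C_of_mem_parts hK hP' hbP' hx.1
    · rw [Nat.lt_iff_add_one_le]
      refine two_le_card_of_two_mem hQQ' ?_ ?_
      · exact Multiset.mem_filter.mpr ⟨hQ, ⟨a, Finset.mem_inter.mpr
          ⟨hPQ haP, Finset.mem_insert_self a _⟩⟩⟩
      · exact Multiset.mem_filter.mpr ⟨hQ', ⟨b, Finset.mem_inter.mpr
          ⟨hPQ' hbP', Finset.mem_insert_of_mem (Finset.mem_singleton_self b)⟩⟩⟩
lemma degenerate_of_card_le_one {K : CMI n} (h : Multiset.card K.Qs ≤ 1) :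
    Degenerate K := by
  intro p _
  unfold Valid J
  interval_cases hcard : Multiset.card K.Qs
  · have h0 : K.Qs = 0 := Multiset.card_eq_zero.mp hcard
    rw [h0]
    simp only [Multiset.map_zero, Multiset.sum_zero, Multiset.sup_zero]
    unfold Hc
    have : (⊥ : Finset (Fin n)) ∪ K.C = K.C := by
      simp
    rw [this, sub_self, sub_zero]
  · obtain ⟨Q, hQ⟩ := Multiset.card_eq_one.mp hcard
    rw [hQ]
    simp only [Multiset.map_singleton, Multiset.sum_singleton, Multiset.sup_singleton]
    rw [sub_self]

lemma claimA {K : CMI n} (hp : ∃ x y, Rr K x y) {P : Finset (Fin n)} {a : Fin n}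
    (hP : P ∈ parts K) (ha : a ∈ P) :
    ∀ b, b ∈ P ↔ ((∃ y, Rr K b y) ∧ ¬ Rr K a b) := by
  intro b
  constructor
  · intro hbP
    constructor
    · obtain ⟨x, y, P1, P2, hP1, hP2, hne, _, hyP2⟩ := hp
      by_cases hPP1 : P = P1
      · obtain ⟨c, hc⟩ := Finset.nonempty_iff_ne_empty.mpr (mem_parts.mp hP2).2
        exact ⟨c, P, P2, hP, hP2, hPP1 ▸ hne, hbP, hc⟩
      · obtain ⟨c, hc⟩ := Finset.nonempty_iff_ne_empty.mpr (mem_parts.mp hP1).2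
        exact ⟨c, P, P1, hP, hP1, hPP1, hbP, hc⟩
    · rintro ⟨P1, P2, hP1, hP2, hne, haP1, hbP2⟩
      exact hne ((part_unique hP1 hP haP1 ha).trans
        (part_unique hP hP2 hbP hbP2))
  · rintro ⟨⟨y, Pb, Py, hPb, hPy, hney, hbPb, hyPy⟩, hnab⟩
    by_cases hPbP : Pb = P
    · exact hPbP ▸ hbPb
    · exact absurd ⟨P, Pb, hP, hPb, fun hc => hPbP hc.symm, ha, hbPb⟩ hnab

lemma parts_char {K : CMI n} (hp : ∃ x y, Rr K x y) (P : Finset (Fin n)) :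
    P ∈ parts K ↔ ∃ a, (∃ y, Rr K a y) ∧
      (∀ b, b ∈ P ↔ ((∃ y, Rr K b y) ∧ ¬ Rr K a b)) := by
  constructor
  · intro hP
    obtain ⟨a, ha⟩ := Finset.nonempty_iff_ne_empty.mpr (mem_parts.mp hP).2
    exact ⟨a, ((claimA hp hP ha a).mp ha).1, claimA hp hP ha⟩
  · rintro ⟨a, ⟨y, hRay⟩, hchar⟩
    obtain ⟨Pa, Py, hPa, hPy, hne, haPa, hyPy⟩ := hRay
    have hPPa : P = Pa := by
      ext b
      rw [hchar b, claimA hp hPa haPa b]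
    exact hPPa ▸ hPa

lemma canParts_eq_parts {K : CMI n} (hk2 : 2 ≤ Multiset.card K.Qs)
    (hp : ∃ x y, Rr K x y) : canParts K = parts K := by
  obtain ⟨x, y, P, P', hP, hP', hne, _, _⟩ := hp
  have hcard : 2 ≤ Multiset.card (parts K) := two_le_card_of_two_mem hne hP hP'
  unfold canParts
  rw [if_neg (by omega), if_neg (by rintro ⟨-, h2⟩; omega)]

lemma canParts_eq_zero {K : CMI n} (hK : IsPure K) (hk2 : 2 ≤ Multiset.card K.Qs)
    (hnp : ¬ ∃ x y, Rr K x y) : canParts K = 0 := by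
  have hparts1 : Multiset.card (parts K) ≤ 1 := by
    by_contra hc
    push_neg at hc
    obtain ⟨P, P', t, hPt⟩ := exists_two hc
    have hP : P ∈ parts K := by rw [hPt]; exact Multiset.mem_cons_self _ _
    have hP' : P' ∈ parts K := by
      rw [hPt]; exact Multiset.mem_cons_of_mem (Multiset.mem_cons_self _ _)
    by_cases hPP' : P = P'
    · have : 2 ≤ Multiset.count P (parts K) := by
        rw [hPt, ← hPP', Multiset.count_cons_self, Multiset.count_cons_self]
        omega
      have := count_parts_le_one K P
      omega
    · obtain ⟨a, ha⟩ := Finset.nonempty_iff_ne_empty.mpr (mem_parts.mp hP).2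
      obtain ⟨b, hb⟩ := Finset.nonempty_iff_ne_empty.mpr (mem_parts.mp hP').2
      exact hnp ⟨a, b, P, P', hP, hP', hPP', ha, hb⟩
  have hI0 : repSet K ≠ ∅ := by
    intro h0
    have hmap : K.Qs.map (fun Q => Q \ repSet K) = K.Qs := by
      rw [show (fun Q : Finset (Fin n) => Q \ repSet K) = id by
        funext Q; rw [h0]; simp, Multiset.map_id]
    have hfil : (parts K) = K.Qs := by
      unfold parts
      rw [hmap, Multiset.filter_eq_self]
      intro Q hQ
      exact (hK Q hQ).1
    rw [hfil] at hparts1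
    omega
  unfold canParts
  rw [if_neg (by omega), if_pos ⟨hI0, hparts1⟩]

/-- for non-degenerate pure-form `K ∼ K'`, the multisets of `P`-entries
of their canonical forms coincide. -/
theorem stmt8 {n : ℕ} (K K' : CMI n) (hK : IsPure K) (hK' : IsPure K')
    (hdK : ¬ Degenerate K) (hdK' : ¬ Degenerate K')
    (h : Equivalent K K') :
    canParts K = canParts K' := by
  have hk2 : 2 ≤ Multiset.card K.Qs := by
    by_contra hc
    exact hdK (degenerate_of_card_le_one (by omega))
  have hk2' : 2 ≤ Multiset.card K'.Qs := by
    by_contra hc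
    exact hdK' (degenerate_of_card_le_one (by omega))
  have hE : ∀ S : Finset (Fin n),
      ((K.C ∩ S).Nonempty ∨
        Multiset.card (K.Qs.filter fun Q => (Q ∩ S).Nonempty) ≤ 1)
      ↔ ((K'.C ∩ S).Nonempty ∨
        Multiset.card (K'.Qs.filter fun Q => (Q ∩ S).Nonempty) ≤ 1) := by
    intro S
    rw [← valid_pS S K, ← valid_pS S K']
    exact h (pS S) (finiteEntropy_pS S)
  have hI : repSet K = repSet K' := by
    ext a
    rw [← singleton_char hK a, ← singleton_char hK' a]
    exact not_congr (hE {a})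
  have hRR : ∀ a b, Rr K a b ↔ Rr K' a b := by
    intro a b
    by_cases hab : a = b
    · subst hab
      constructor <;> rintro ⟨P, P', hP, hP', hne, haP, hbP'⟩ <;>
        exact absurd (part_unique hP hP' haP hbP') hne
    by_cases haI : a ∈ repSet K
    · constructor <;> rintro ⟨P, P', hP, hP', hne, haP, hbP'⟩
      · exact absurd haI (not_mem_repSet_of_mem_parts hP haP)
      · exact absurd (hI ▸ haI) (not_mem_repSet_of_mem_parts hP haP)
    by_cases hbI : b ∈ repSet K
    · constructor <;> rintro ⟨P, P', hP, hP', hne, haP, hbP'⟩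
      · exact absurd hbI (not_mem_repSet_of_mem_parts hP' hbP')
      · exact absurd (hI ▸ hbI) (not_mem_repSet_of_mem_parts hP' hbP')
    · rw [← pair_char hK hab haI hbI, ← pair_char hK' hab (hI ▸ haI) (hI ▸ hbI)]
      exact not_congr (hE {a, b})
  by_cases hp : ∃ x y, Rr K x y
  · have hp' : ∃ x y, Rr K' x y := by
      obtain ⟨x, y, hxy⟩ := hp
      exact ⟨x, y, (hRR x y).mp hxy⟩
    rw [canParts_eq_parts hk2 hp, canParts_eq_parts hk2' hp']
    refine (Multiset.Nodup.ext (parts_nodup K) (parts_nodup K')).mpr ?_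
    intro P
    rw [parts_char hp P, parts_char hp' P]
    simp only [hRR]
  · have hnp' : ¬ ∃ x y, Rr K' x y := by
      rintro ⟨x, y, hxy⟩
      exact hp ⟨x, y, (hRR x y).mpr hxy⟩
    rw [canParts_eq_zero hK hk2 hp, canParts_eq_zero hK' hk2' hnp']

end Paper
end
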